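/- Let $p$ be a prime and let $\alpha \geq 1$ with $p^\alpha \parallel (q_1, q_2, q_3)$ (i.e., $p^\alpha \mid (q_1,q_2,q_3)$ and $p^{\alpha+1} \nmid (q_1,q_2,q_3)$), and suppose $n \equiv a_1 + a_2 + a_3 \pmod{(q_1,q_2,q_3)}$. Define $\lambda(p^k) := \frac{\varphi(q_1)\varphi(q_2)\varphi(q_3)}{\varphi([q_1,p^k])\varphi([q_2,p^k])\varphi([q_3,p^k])} b(p^k)$ where $b(p^k) = \sum_{a < p^k, (a,p)=1} c_1(a,p^k) c_2(a,p^k) c_3(a,p^k) e(-na/p^k)$. Then $1 + \lambda(p) + \lambda(p^2) + \cdots + \lambda(p^\alpha) = p^\alpha$. -/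

import Mathlib

open Finset

/-- `e(x) = e^{2πix}`. -/
noncomputable def e (x : ℂ) : ℂ := Complex.exp (2 * Real.pi * Complex.I * x)

/-- The generalized Ramanujan sum. -/
noncomputable def ramanujanC (aj : ℤ) (qj : ℕ) (a : ℤ) (q : ℕ) : ℂ :=
  ∑ k ∈ (Finset.Icc 1 q).filter
      (fun k => Nat.Coprime k q ∧ (k : ℤ) % (Nat.gcd qj q : ℤ) = aj % (Nat.gcd qj q : ℤ)),
    e ((a : ℂ) * k / q)

/-- `b(q) = ∑_{a < q, (a,q)=1} c₁(a,q) c₂(a,q) c₃(a,q) e(-na/q)`. -/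
noncomputable def bfun (n a1 a2 a3 : ℤ) (q1 q2 q3 : ℕ) (q : ℕ) : ℂ :=
  ∑ a ∈ (Finset.range q).filter (fun a => Nat.Coprime a q),
    ramanujanC a1 q1 (a : ℤ) q * ramanujanC a2 q2 (a : ℤ) q * ramanujanC a3 q3 (a : ℤ) q *
      e (-(n : ℂ) * a / q)

/-- `λ(q)`, the summand of the singular series. -/
noncomputable def lamfun (n a1 a2 a3 : ℤ) (q1 q2 q3 : ℕ) (q : ℕ) : ℂ :=
  ((Nat.totient q1 : ℂ) * (Nat.totient q2 : ℂ) * (Nat.totient q3 : ℂ)) /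
      ((Nat.totient (Nat.lcm q1 q) : ℂ) * (Nat.totient (Nat.lcm q2 q) : ℂ) *
        (Nat.totient (Nat.lcm q3 q) : ℂ)) *
    bfun n a1 a2 a3 q1 q2 q3 q
/-!
When `p^k` divides every `qⱼ`, the congruence condition in `cⱼ(a, p^k)` fixes `m ≡ aⱼ (mod p^k)`,
so `cⱼ(a, p^k) = e(a aⱼ / p^k)`. Every summand of `b(p^k)` is then `e(a (a₁ + a₂ + a₃ - n) / p^k) = 1`,
whence `λ(p^k) = b(p^k) = φ(p^k)`, and `1 + ∑_{k ≤ α} φ(p^k) = ∑_{d ∣ p^α} φ(d) = p^α`.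
-/

lemma e_add (x y : ℂ) : e (x + y) = e x * e y := by
  simp only [e, mul_add, Complex.exp_add]

lemma e_intCast (z : ℤ) : e z = 1 := by
  rw [e, mul_comm]
  exact Complex.exp_int_mul_two_pi_mul_I z

lemma e_div_eq_of_modEq {Q : ℕ} (hQ : Q ≠ 0) {x y : ℤ} (h : x ≡ y [ZMOD Q]) :
    e (x / Q) = e (y / Q) := by
  obtain ⟨t, ht⟩ := h.dvd
  have hy : (y : ℂ) / Q = x / Q + t := by
    rw [show y = x + Q * t by omega]
    push_cast
    field_simp
  rw [hy, e_add, e_intCast, mul_one]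

lemma ramanujanC_of_dvd {aj : ℤ} {qj Q : ℕ} (hQ : 1 < Q) (hdvd : Q ∣ qj)
    (haj : IsCoprime aj Q) (a : ℤ) :
    ramanujanC aj qj a Q = e (a * aj / Q) := by
  have hQz : (0 : ℤ) < Q := by omega
  set m : ℕ := (aj % Q).toNat
  have hm : (m : ℤ) = aj % Q := Int.toNat_of_nonneg (Int.emod_nonneg _ hQz.ne')
  have hmQ : m < Q := by have := Int.emod_lt_of_pos aj hQz; omega
  have hm_cop : m.Coprime Q := by
    rw [← Nat.isCoprime_iff_coprime, hm, Int.isCoprime_iff_gcd_eq_one, Int.gcd_emod]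
    exact Int.isCoprime_iff_gcd_eq_one.mp haj
  have hm_pos : 0 < m := by
    by_contra! h0
    rw [Nat.le_zero.mp h0, Nat.coprime_zero_left] at hm_cop
    omega
  have hfilter : (Icc 1 Q).filter (fun k : ℕ => k.Coprime Q ∧
      (k : ℤ) % (Nat.gcd qj Q : ℤ) = aj % (Nat.gcd qj Q : ℤ)) = {m} := by
    rw [Nat.gcd_eq_right hdvd, eq_singleton_iff_unique_mem]
    refine ⟨mem_filter.mpr ⟨mem_Icc.mpr ⟨hm_pos, hmQ.le⟩, hm_cop, by rw [hm, Int.emod_emod]⟩, ?_⟩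
    rintro k hk
    simp only [mem_filter, mem_Icc] at hk
    obtain ⟨⟨-, hkQ⟩, hk_cop, hk_mod⟩ := hk
    have hk_lt : k < Q := lt_of_le_of_ne hkQ fun h => by
      rw [h, Nat.coprime_self] at hk_cop
      omega
    rw [Int.emod_eq_of_lt (by omega) (by omega)] at hk_mod
    omega
  rw [ramanujanC, hfilter, sum_singleton]
  exact_mod_cast e_div_eq_of_modEq (by omega) ((hm ▸ Int.mod_modEq aj Q).mul_left a)

section

variable {n a1 a2 a3 : ℤ} {q1 q2 q3 Q : ℕ}

lemma bfun_of_dvd (hQ : 1 < Q) (hd1 : Q ∣ q1) (hd2 : Q ∣ q2) (hd3 : Q ∣ q3)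
    (ha1 : IsCoprime a1 Q) (ha2 : IsCoprime a2 Q) (ha3 : IsCoprime a3 Q)
    (hcong : (Q : ℤ) ∣ a1 + a2 + a3 - n) :
    bfun n a1 a2 a3 q1 q2 q3 Q = Nat.totient Q := by
  have hterm : ∀ a : ℕ, ramanujanC a1 q1 a Q * ramanujanC a2 q2 a Q * ramanujanC a3 q3 a Q *
      e (-(n : ℂ) * a / Q) = 1 := fun a => by
    have hzero : (a : ℤ) * (a1 + a2 + a3 - n) ≡ 0 [ZMOD Q] :=
      Int.modEq_zero_iff_dvd.mpr (hcong.mul_left a)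
    calc _ = e (((a * (a1 + a2 + a3 - n) : ℤ) : ℂ) / Q) := by
          rw [ramanujanC_of_dvd hQ hd1 ha1, ramanujanC_of_dvd hQ hd2 ha2,
            ramanujanC_of_dvd hQ hd3 ha3, ← e_add, ← e_add, ← e_add]
          push_cast
          ring_nf
      _ = e (((0 : ℤ) : ℂ) / Q) := e_div_eq_of_modEq (by omega) hzero
      _ = 1 := by rw [Int.cast_zero, zero_div, ← Int.cast_zero, e_intCast]
  rw [bfun, sum_congr rfl fun a _ => hterm a, sum_const, nsmul_one, Nat.totient_eq_card_coprime]
  simp only [Nat.coprime_comm]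

lemma lamfun_of_dvd (hq1 : q1 ≠ 0) (hq2 : q2 ≠ 0) (hq3 : q3 ≠ 0) (hd1 : Q ∣ q1) (hd2 : Q ∣ q2)
    (hd3 : Q ∣ q3) : lamfun n a1 a2 a3 q1 q2 q3 Q = bfun n a1 a2 a3 q1 q2 q3 Q := by
  rw [lamfun, Nat.lcm_eq_left hd1, Nat.lcm_eq_left hd2, Nat.lcm_eq_left hd3, div_self, one_mul]
  simp [Nat.totient_eq_zero, hq1, hq2, hq3]

end

lemma one_add_sum_totient_prime_pow {p : ℕ} (hp : p.Prime) (α : ℕ) :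
    1 + ∑ k ∈ Icc 1 α, (Nat.totient (p ^ k) : ℂ) = (p : ℂ) ^ α := by
  have := Nat.sum_totient (p ^ α)
  rw [Nat.sum_divisors_prime_pow hp, range_eq_Ico, sum_eq_sum_Ico_succ_bot (Nat.zero_lt_succ α),
    pow_zero, Nat.totient_one, Nat.succ_eq_add_one, zero_add, Ico_add_one_right_eq_Icc] at this
  exact_mod_cast this

theorem stmt19_general (p : ℕ) (hp : p.Prime) (α : ℕ)
    (n a1 a2 a3 : ℤ) (q1 q2 q3 : ℕ)
    (hq1 : 1 ≤ q1) (hq2 : 1 ≤ q2) (hq3 : 1 ≤ q3)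
    (ha1 : Int.gcd a1 q1 = 1) (ha2 : Int.gcd a2 q2 = 1) (ha3 : Int.gcd a3 q3 = 1)
    (hdvd : p ^ α ∣ Nat.gcd q1 (Nat.gcd q2 q3))
    (hcong : ((Nat.gcd q1 (Nat.gcd q2 q3) : ℤ)) ∣ (a1 + a2 + a3 - n)) :
    1 + ∑ k ∈ Finset.Icc 1 α, lamfun n a1 a2 a3 q1 q2 q3 (p ^ k) = ((p : ℂ)) ^ α := by
  rw [← one_add_sum_totient_prime_pow hp α]
  congr 1
  refine sum_congr rfl fun k hk => ?_
  obtain ⟨hk_pos, hkα⟩ := mem_Icc.mp hk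
  have hg : p ^ k ∣ Nat.gcd q1 (Nat.gcd q2 q3) := (pow_dvd_pow p hkα).trans hdvd
  have hd1 : p ^ k ∣ q1 := hg.trans (Nat.gcd_dvd_left _ _)
  have hd2 : p ^ k ∣ q2 := hg.trans ((Nat.gcd_dvd_right _ _).trans (Nat.gcd_dvd_left _ _))
  have hd3 : p ^ k ∣ q3 := hg.trans ((Nat.gcd_dvd_right _ _).trans (Nat.gcd_dvd_right _ _))
  have hcop {a : ℤ} {q : ℕ} (ha : Int.gcd a q = 1) (hd : p ^ k ∣ q) : IsCoprime a (p ^ k : ℕ) :=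
    (Int.isCoprime_iff_gcd_eq_one.mpr ha).of_isCoprime_of_dvd_right (Int.natCast_dvd_natCast.mpr hd)
  rw [lamfun_of_dvd (by omega) (by omega) (by omega) hd1 hd2 hd3,
    bfun_of_dvd (Nat.one_lt_pow (by omega) hp.one_lt) hd1 hd2 hd3 (hcop ha1 hd1) (hcop ha2 hd2)
      (hcop ha3 hd3) ((Int.natCast_dvd_natCast.mpr hg).trans hcong)]

theorem stmt19 (p : ℕ) (hp : p.Prime) (α : ℕ) (hα : 1 ≤ α)
    (n a1 a2 a3 : ℤ) (q1 q2 q3 : ℕ)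
    (hq1 : 1 ≤ q1) (hq2 : 1 ≤ q2) (hq3 : 1 ≤ q3)
    (ha1 : Int.gcd a1 q1 = 1) (ha2 : Int.gcd a2 q2 = 1) (ha3 : Int.gcd a3 q3 = 1)
    (hdvd : p ^ α ∣ Nat.gcd q1 (Nat.gcd q2 q3))
    (hndvd : ¬ p ^ (α + 1) ∣ Nat.gcd q1 (Nat.gcd q2 q3))
    (hcong : ((Nat.gcd q1 (Nat.gcd q2 q3) : ℤ)) ∣ (a1 + a2 + a3 - n)) :
    1 + ∑ k ∈ Finset.Icc 1 α, lamfun n a1 a2 a3 q1 q2 q3 (p ^ k) = ((p : ℂ)) ^ α :=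
  stmt19_general p hp α n a1 a2 a3 q1 q2 q3 hq1 hq2 hq3 ha1 ha2 ha3 hdvd hcong
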